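/- Let κ > 0 and ζ > 0, and define r₀ : ℝ → ℝ by r₀(x) = L( (κ/ζ²)·x·exp(−x²/(2ζ²)) ), corresponding to the bump initial twist profile w₀(x) = κ·exp(−x²/(2ζ²)). Then: r₀ is an odd function; lim_{x→+∞} r₀(x) = 0; and r₀'(α)·r₀(α) < 0 if and only if α ∈ (−ζ, 0) ∪ (ζ, +∞). Consequently, the breakdown condition r₀'(α)·( r₀(α) + lim_{x→+∞} r₀(x) ) < 0 holds exactly for α ∈ (−ζ, 0) ∪ (ζ, +∞). -/

import Mathlib

/-!
Since `L` is odd and strictly increasing, `r₀ = L ∘ g` with `g(x) = c·x·exp(−x²/(2ζ²))`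
inherits oddness and the limit `0` at `+∞` from `g`, and `r₀'·r₀ = L'(g)·g'·L(g)` has the
sign of `g'·g = (c·exp(−x²/(2ζ²))/ζ)²·x·(ζ² − x²)`.
-/

open Filter

/-- The primitive `L` of the wave velocity `Q(ξ) = √(1+ξ²)` with `L 0 = 0`. -/
noncomputable def L (u : ℝ) : ℝ := (u * Real.sqrt (1 + u ^ 2) + Real.arsinh u) / 2

lemma L_zero : L 0 = 0 := by simp [L]

lemma L_neg (u : ℝ) : L (-u) = -L u := by
  simp only [L, neg_sq, Real.arsinh_neg]
  ring

lemma hasDerivAt_L (u : ℝ) : HasDerivAt L (Real.sqrt (1 + u ^ 2)) u := by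
  have hpos : (0 : ℝ) < 1 + u ^ 2 := by positivity
  have hsqrt : HasDerivAt (fun u : ℝ => Real.sqrt (1 + u ^ 2))
      (2 * u / (2 * Real.sqrt (1 + u ^ 2))) u := by
    simpa using ((hasDerivAt_pow 2 u).const_add 1).sqrt hpos.ne'
  refine (((hasDerivAt_id' u).mul hsqrt).add (Real.hasDerivAt_arsinh u)).div_const 2
    |>.congr_deriv ?_
  have hS : Real.sqrt (1 + u ^ 2) ≠ 0 := (Real.sqrt_pos.2 hpos).ne'
  field_simp
  rw [Real.sq_sqrt hpos.le]
  ring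

lemma L_strictMono : StrictMono L :=
  strictMono_of_deriv_pos fun u => (hasDerivAt_L u).deriv ▸ Real.sqrt_pos.2 (by positivity)

lemma L_pos_iff {u : ℝ} : 0 < L u ↔ 0 < u := by
  simpa [L_zero] using L_strictMono.lt_iff_lt (a := 0) (b := u)

lemma L_neg_iff {u : ℝ} : L u < 0 ↔ u < 0 := by
  simpa [L_zero] using L_strictMono.lt_iff_lt (a := u) (b := 0)

lemma mul_L_neg_iff {a u : ℝ} : a * L u < 0 ↔ a * u < 0 := by
  simp only [mul_neg_iff, L_pos_iff, L_neg_iff]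

lemma deriv_L_comp_mul_neg_iff {g : ℝ → ℝ} {x : ℝ} (hg : DifferentiableAt ℝ g x) :
    deriv (fun y => L (g y)) x * L (g x) < 0 ↔ deriv g x * g x < 0 := by
  have hQ : 0 < Real.sqrt (1 + g x ^ 2) := Real.sqrt_pos.2 (by positivity)
  have hcomp : HasDerivAt (fun y => L (g y)) (Real.sqrt (1 + g x ^ 2) * deriv g x) x :=
    (hasDerivAt_L (g x)).comp x hg.hasDerivAt
  rw [hcomp.deriv, mul_assoc, ← smul_eq_mul,
    smul_neg_iff_of_pos_left hQ, mul_L_neg_iff]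

/-- With `c = κ/ζ²` this is `−w₀'` for the bump `w₀(x) = κ·exp(−x²/(2ζ²))`. -/
noncomputable def bumpSlope (c ζ x : ℝ) : ℝ := c * x * Real.exp (-x ^ 2 / (2 * ζ ^ 2))

lemma bumpSlope_neg (c ζ x : ℝ) : bumpSlope c ζ (-x) = -bumpSlope c ζ x := by
  simp only [bumpSlope, neg_sq]
  ring

lemma hasDerivAt_bumpSlope (c ζ x : ℝ) :
    HasDerivAt (bumpSlope c ζ)
      (c * Real.exp (-x ^ 2 / (2 * ζ ^ 2)) * (1 - x ^ 2 / ζ ^ 2)) x := by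
  have hexp : HasDerivAt (fun x : ℝ => Real.exp (-x ^ 2 / (2 * ζ ^ 2)))
      (Real.exp (-x ^ 2 / (2 * ζ ^ 2)) * (-(2 * x) / (2 * ζ ^ 2))) x := by
    simpa using (((hasDerivAt_pow 2 x).neg).div_const (2 * ζ ^ 2)).exp
  refine (((hasDerivAt_id' x).const_mul c).mul hexp).congr_deriv ?_
  ring

lemma tendsto_bumpSlope_atTop (c : ℝ) {ζ : ℝ} (hζ : ζ ≠ 0) :
    Tendsto (bumpSlope c ζ) atTop (nhds 0) := by
  have hgauss := (tendsto_rpow_abs_mul_exp_neg_mul_sq_cocompact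
    (a := 1 / (2 * ζ ^ 2)) (by positivity) 1).mono_left atTop_le_cocompact
  have hslope : ∀ᶠ x in atTop,
      c * (|x| ^ (1 : ℝ) * Real.exp (-(1 / (2 * ζ ^ 2)) * x ^ 2)) = bumpSlope c ζ x := by
    filter_upwards [eventually_ge_atTop 0] with x hx
    rw [Real.rpow_one, abs_of_nonneg hx, bumpSlope]
    ring_nf
  simpa using (hgauss.const_mul c).congr' hslope

lemma mul_sq_sub_sq_neg_iff {ζ x : ℝ} (hζ : 0 < ζ) :
    x * (ζ ^ 2 - x ^ 2) < 0 ↔ x ∈ Set.Ioo (-ζ) 0 ∪ Set.Ioi ζ := by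
  simp only [Set.mem_union, Set.mem_Ioo, Set.mem_Ioi]
  constructor
  · intro h
    rcases lt_or_ge x 0 with hx | hx
    · have : 0 < ζ ^ 2 - x ^ 2 := pos_of_mul_neg_right h hx.le
      exact Or.inl ⟨by nlinarith, hx⟩
    · have : ζ ^ 2 - x ^ 2 < 0 := neg_of_mul_neg_right h hx
      exact Or.inr (by nlinarith)
  · rintro (⟨hζx, hx⟩ | hζx)
    · exact mul_neg_of_neg_of_pos hx (by nlinarith)
    · exact mul_neg_of_pos_of_neg (hζ.trans hζx) (by nlinarith)

lemma deriv_bumpSlope_mul_neg_iff {c ζ : ℝ} (hc : c ≠ 0) (hζ : 0 < ζ) (x : ℝ) :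
    deriv (bumpSlope c ζ) x * bumpSlope c ζ x < 0 ↔ x ∈ Set.Ioo (-ζ) 0 ∪ Set.Ioi ζ := by
  have hprod : deriv (bumpSlope c ζ) x * bumpSlope c ζ x
      = (c * Real.exp (-x ^ 2 / (2 * ζ ^ 2)) / ζ) ^ 2 * (x * (ζ ^ 2 - x ^ 2)) := by
    rw [(hasDerivAt_bumpSlope c ζ x).deriv, bumpSlope]
    field_simp
  have hpos : 0 < (c * Real.exp (-x ^ 2 / (2 * ζ ^ 2)) / ζ) ^ 2 := by positivity
  rw [hprod, ← smul_eq_mul, smul_neg_iff_of_pos_left hpos, mul_sq_sub_sq_neg_iff hζ]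

/-- for the bump initial profile `w₀(x) = κ·exp(−x²/(2ζ²))`, the initial
Riemann invariant `r₀(x) = L((κ/ζ²)·x·exp(−x²/(2ζ²)))` is odd, tends to `0` at `+∞`,
satisfies `r₀'(α)·r₀(α) < 0` iff `α ∈ (−ζ,0) ∪ (ζ,∞)`, and hence the breakdown condition
`r₀'(α)(r₀(α) + r₀(+∞)) < 0` holds exactly for `α ∈ (−ζ,0) ∪ (ζ,∞)`. -/
theorem bump_breakdown_condition
    (κ ζ : ℝ) (hκ : 0 < κ) (hζ : 0 < ζ)
    (r₀ : ℝ → ℝ)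
    (hr₀ : ∀ x : ℝ, r₀ x = L ((κ / ζ ^ 2) * x * Real.exp (-x ^ 2 / (2 * ζ ^ 2)))) :
    (∀ x : ℝ, r₀ (-x) = -r₀ x) ∧
    Tendsto r₀ atTop (nhds 0) ∧
    (∀ α : ℝ, deriv r₀ α * r₀ α < 0 ↔ α ∈ Set.Ioo (-ζ) 0 ∪ Set.Ioi ζ) ∧
    (∀ α : ℝ, deriv r₀ α * (r₀ α + limUnder atTop r₀) < 0 ↔
      α ∈ Set.Ioo (-ζ) 0 ∪ Set.Ioi ζ) := by
  set c := κ / ζ ^ 2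
  obtain rfl : r₀ = fun x => L (bumpSlope c ζ x) := funext hr₀
  have hc : c ≠ 0 := by positivity
  have hlim : Tendsto (fun x => L (bumpSlope c ζ x)) atTop (nhds 0) := by
    simpa [L_zero, Function.comp_def] using
      (hasDerivAt_L 0).continuousAt.tendsto.comp (tendsto_bumpSlope_atTop c hζ.ne')
  have hsign (α : ℝ) :
      deriv (fun x => L (bumpSlope c ζ x)) α * L (bumpSlope c ζ α) < 0 ↔
        α ∈ Set.Ioo (-ζ) 0 ∪ Set.Ioi ζ := by
    rw [deriv_L_comp_mul_neg_iff (hasDerivAt_bumpSlope c ζ α).differentiableAt,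
      deriv_bumpSlope_mul_neg_iff hc hζ]
  refine ⟨fun x => by simp only [bumpSlope_neg, L_neg], hlim, hsign, fun α => ?_⟩
  rw [hlim.limUnder_eq, add_zero, hsign]
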